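/- The DisARM single-variable estimator is unbiased: for f : {0,1} → ℝ and the antithetic pair b = 1{1-u < σ(α)}, b̃ = 1{u < σ(α)} with u uniform on (0,1), the expectation of (1/2)(f(b) - f(b̃)) · (-1)^{b̃} · 1{b ≠ b̃} · σ(|α|) equals d/dα E_{z~Bern(σ(α))}[f(z)]. -/

import Mathlib

open scoped Classical

noncomputable def sigmoid (x : ℝ) : ℝ := 1 / (1 + Real.exp (-x))

lemma sigmoid_pos (x : ℝ) : 0 < sigmoid x := by
  unfold sigmoid
  positivity

lemma sigmoid_lt_one (x : ℝ) : sigmoid x < 1 := by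
  unfold sigmoid
  rw [div_lt_one (by positivity)]
  linarith [Real.exp_pos (-x)]

lemma sigmoid_neg (x : ℝ) : sigmoid (-x) = 1 - sigmoid x := by
  unfold sigmoid
  have h1 : (0:ℝ) < 1 + Real.exp (-x) := by positivity
  have h2 : (0:ℝ) < 1 + Real.exp x := by positivity
  have hx : Real.exp x * Real.exp (-x) = 1 := by
    rw [← Real.exp_add]; simp
  field_simp
  nlinarith

lemma aux_int (c m M : ℝ) (g : ℝ → ℝ) (hm : 0 < m) (hmM : m ≤ M) (hM : M < 1)
    (hg : ∀ u ∈ Set.Ioo (0:ℝ) 1, u ≠ m → u ≠ M →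
      g u = (Set.Ioo 0 m ∪ Set.Ioo M 1).indicator (fun _ => c) u) :
    ∫ u in Set.Ioo (0:ℝ) 1, g u = (m + (1 - M)) * c := by
  have hae : ∀ᵐ u : ℝ, u ≠ m ∧ u ≠ M := by
    have : MeasureTheory.volume ({m, M} : Set ℝ) = 0 := by
      apply Set.Finite.measure_zero; exact Set.toFinite _
    filter_upwards [MeasureTheory.measure_eq_zero_iff_ae_notMem.mp this] with u hu
    simp only [Set.mem_insert_iff, Set.mem_singleton_iff, not_or] at hu
    exact hu
  have hcongr : ∫ u in Set.Ioo (0:ℝ) 1, g u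
      = ∫ u in Set.Ioo (0:ℝ) 1, (Set.Ioo 0 m ∪ Set.Ioo M 1).indicator (fun _ => c) u := by
    apply MeasureTheory.setIntegral_congr_ae measurableSet_Ioo
    filter_upwards [hae] with u hu hmem
    exact hg u hmem hu.1 hu.2
  rw [hcongr, MeasureTheory.setIntegral_indicator
    ((measurableSet_Ioo).union measurableSet_Ioo)]
  have hsub : (Set.Ioo (0:ℝ) m ∪ Set.Ioo M 1) ⊆ Set.Ioo 0 1 := by
    apply Set.union_subset
    · exact Set.Ioo_subset_Ioo le_rfl (by linarith)
    · exact Set.Ioo_subset_Ioo (by linarith) le_rfl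
  rw [Set.inter_eq_self_of_subset_right hsub, MeasureTheory.setIntegral_const]
  have hdisj : Disjoint (Set.Ioo (0:ℝ) m) (Set.Ioo M 1) := by
    rw [Set.disjoint_left]
    intro u hu hu'
    simp only [Set.mem_Ioo] at hu hu'
    linarith [hu.2, hu'.1]
  rw [MeasureTheory.measureReal_def, MeasureTheory.measure_union hdisj measurableSet_Ioo,
    Real.volume_Ioo, Real.volume_Ioo,
    ENNReal.toReal_add ENNReal.ofReal_ne_top ENNReal.ofReal_ne_top,
    ENNReal.toReal_ofReal (by linarith), ENNReal.toReal_ofReal (by linarith)]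
  rw [smul_eq_mul]
  ring

lemma half_sigmoid (α : ℝ) (hα : 0 ≤ α) : 1 - sigmoid α ≤ sigmoid α := by
  unfold sigmoid
  have he : Real.exp (-α) ≤ 1 := Real.exp_le_one_iff.mpr (by linarith)
  have hp : (0:ℝ) < 1 + Real.exp (-α) := by positivity
  have hx : (1:ℝ)/2 ≤ 1 / (1 + Real.exp (-α)) := by
    rw [div_le_div_iff₀ (by norm_num) hp]; linarith
  linarith

/-- Unbiasedness of the DisARM single-variable estimator: for `u` uniform on `(0,1)`,
with antithetic pair `b = 1{1-u < σ(α)}`, `b̃ = 1{u < σ(α)}`, the expectation of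
`(1/2)(f(b) - f(b̃)) · (-1)^b̃ · 1{b ≠ b̃} · σ(|α|)` equals the derivative
`d/dα E_{z ~ Bern(σ(α))}[f(z)] = (f(1) - f(0)) σ(α)(1 - σ(α))`. -/
theorem stmt_7 (f : Bool → ℝ) (α : ℝ) :
    (∫ u in Set.Ioo (0:ℝ) 1,
        (1/2) * (f (decide (1 - u < sigmoid α)) - f (decide (u < sigmoid α)))
          * (-1 : ℝ) ^ (if u < sigmoid α then 1 else 0 : ℕ)
          * (if (1 - u < sigmoid α) ≠ (u < sigmoid α) then (1:ℝ) else 0)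
          * sigmoid |α|)
      = (f true - f false) * sigmoid α * (1 - sigmoid α) := by
  have hs0 := sigmoid_pos α
  have hs1 := sigmoid_lt_one α
  rcases le_total 0 α with hα | hα
  · have hhalf := half_sigmoid α hα
    rw [abs_of_nonneg hα]
    rw [aux_int ((1/2)*(f true - f false)*sigmoid α) (1 - sigmoid α) (sigmoid α) _
      (by linarith) hhalf hs1 ?_]
    · ring
    · intro u hu h1 h2
      obtain ⟨hu0, hu1⟩ := hu
      rcases lt_trichotomy u (1 - sigmoid α) with h | h | h
      · have ha : ¬ (1 - u < sigmoid α) := by linarith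
        have hb : u < sigmoid α := by linarith
        simp [ha, hb, Set.indicator_apply, hu0, h]
        ring
      · exact absurd h h1
      · rcases lt_trichotomy u (sigmoid α) with h' | h' | h'
        · have ha : 1 - u < sigmoid α := by linarith
          simp [ha, h', Set.indicator_apply, not_lt.mpr h.le, not_lt.mpr h'.le]
        · exact absurd h' h2
        · have ha : 1 - u < sigmoid α := by linarith
          have hb : ¬ (u < sigmoid α) := by linarith
          simp [ha, hb, Set.indicator_apply, h', hu1, not_lt.mpr h.le]
  · have hhalf := half_sigmoid (-α) (by linarith)
    rw [sigmoid_neg] at hhalf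
    have hhalf' : sigmoid α ≤ 1 - sigmoid α := by linarith
    rw [abs_of_nonpos hα, sigmoid_neg]
    rw [aux_int ((1/2)*(f true - f false)*(1 - sigmoid α)) (sigmoid α) (1 - sigmoid α) _
      hs0 hhalf' (by linarith) ?_]
    · ring
    · intro u hu h1 h2
      obtain ⟨hu0, hu1⟩ := hu
      rcases lt_trichotomy u (sigmoid α) with h | h | h
      · have ha : ¬ (1 - u < sigmoid α) := by linarith
        simp [ha, h, Set.indicator_apply, hu0]
        ring
      · exact absurd h h1
      · rcases lt_trichotomy u (1 - sigmoid α) with h' | h' | h'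
        · have ha : ¬ (1 - u < sigmoid α) := by linarith
          simp [ha, Set.indicator_apply, not_lt.mpr h.le, not_lt.mpr h'.le]
        · exact absurd h' h2
        · have ha : 1 - u < sigmoid α := by linarith
          have hb : ¬ (u < sigmoid α) := by linarith
          simp [ha, hb, Set.indicator_apply, h', hu1, not_lt.mpr h.le]
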